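/- Let $\mathcal{L}_k \subset \mathbb{R}^{2n}$ be a $k$-dimensional isotropic subspace and $r$ an $n$-dimensional isotropic positive complex subspace of $\mathbb{C}^{2n}$, with $r_\perp = r \cap (\mathcal{L}_k^{\mathbb{C}})^{\perp\omega}$. Then the subspace $\check r = r_\perp + \mathcal{L}_k^{\mathbb{C}}$ satisfies: $r_\perp \cap \mathcal{L}_k^{\mathbb{C}} = \{0\}$, $\dim_{\mathbb{C}} \check r = n$, $\check r$ is isotropic for $\omega$, $\omega(Y,Y^*)=0$ for $Y \in \mathcal{L}_k^{\mathbb{C}}$, and $\frac{1}{i}\omega(Y,Y^*) > 0$ for every $Y \in \check r \setminus \mathcal{L}_k^{\mathbb{C}}$. -/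

import Mathlib

open scoped BigOperators

/-- The complexified phase space `ℂ^{2n}`. -/
abbrev CPhase (n : ℕ) := (Fin n → ℂ) × (Fin n → ℂ)

/-- Complex bilinear extension of the standard symplectic form. -/
noncomputable def symplFormC (n : ℕ) (X Y : CPhase n) : ℂ :=
  ∑ j, (X.1 j * Y.2 j - Y.1 j * X.2 j)

/-- Componentwise complex conjugation `Y ↦ Y^*`. -/
def conjV (n : ℕ) (Y : CPhase n) : CPhase n :=
  (fun j => (starRingEnd ℂ) (Y.1 j), fun j => (starRingEnd ℂ) (Y.2 j))

def IsIsotropicC (n : ℕ) (r : Submodule ℂ (CPhase n)) : Prop :=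
  ∀ X ∈ r, ∀ Y ∈ r, symplFormC n X Y = 0

/-- Positivity: `(1/i) ω(Y, Y^*) > 0` (a positive real number) for nonzero `Y ∈ r`. -/
def IsPositiveGerm (n : ℕ) (r : Submodule ℂ (CPhase n)) : Prop :=
  ∀ Y ∈ r, Y ≠ 0 →
    0 < (-Complex.I * symplFormC n Y (conjV n Y)).re ∧
    (-Complex.I * symplFormC n Y (conjV n Y)).im = 0

/-- The standard symplectic form on the real phase space `ℝ^{2n}`. -/
noncomputable def symplForm (n : ℕ) (X Y : (Fin n → ℝ) × (Fin n → ℝ)) : ℝ :=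
  ∑ j, (X.1 j * Y.2 j - Y.1 j * X.2 j)

def IsIsotropic (n : ℕ) (V : Submodule ℝ ((Fin n → ℝ) × (Fin n → ℝ))) : Prop :=
  ∀ X ∈ V, ∀ Y ∈ V, symplForm n X Y = 0

/-- Inclusion of the real phase space into its complexification. -/
def incC (n : ℕ) (X : (Fin n → ℝ) × (Fin n → ℝ)) : CPhase n :=
  (fun j => (X.1 j : ℂ), fun j => (X.2 j : ℂ))

/-- The complexification `L^ℂ` of a real subspace `L ⊂ ℝ^{2n}` inside `ℂ^{2n}`. -/
noncomputable def complexify (n : ℕ) (L : Submodule ℝ ((Fin n → ℝ) × (Fin n → ℝ))) :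
    Submodule ℂ (CPhase n) :=
  Submodule.span ℂ (incC n '' (L : Set ((Fin n → ℝ) × (Fin n → ℝ))))

/-- The skew-orthogonal complement `V^{⊥ω}` in `ℂ^{2n}`, as a subspace. -/
noncomputable def skewPerpC (n : ℕ) (V : Submodule ℂ (CPhase n)) : Submodule ℂ (CPhase n) where
  carrier := {Y | ∀ X ∈ V, symplFormC n Y X = 0}
  add_mem' := by
    intro a b ha hb X hX
    have h1 := ha X hX
    have h2 := hb X hX
    have hsplit : ∀ j ∈ Finset.univ,
        ((a + b).1 j * X.2 j - X.1 j * (a + b).2 j) =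
          (a.1 j * X.2 j - X.1 j * a.2 j) + (b.1 j * X.2 j - X.1 j * b.2 j) := by
      intro j _
      simp only [Prod.fst_add, Prod.snd_add, Pi.add_apply]
      ring
    show symplFormC n (a + b) X = 0
    rw [symplFormC, Finset.sum_congr rfl hsplit, Finset.sum_add_distrib]
    rw [symplFormC] at h1 h2
    rw [h1, h2, add_zero]
  zero_mem' := by
    intro X hX
    simp [symplFormC]
  smul_mem' := by
    intro c a ha X hX
    have h1 := ha X hX
    have hsplit : ∀ j ∈ Finset.univ,
        ((c • a).1 j * X.2 j - X.1 j * (c • a).2 j) =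
          c * (a.1 j * X.2 j - X.1 j * a.2 j) := by
      intro j _
      simp only [Prod.smul_fst, Prod.smul_snd, Pi.smul_apply, smul_eq_mul]
      ring
    show symplFormC n (c • a) X = 0
    rw [symplFormC, Finset.sum_congr rfl hsplit, ← Finset.mul_sum]
    rw [symplFormC] at h1
    rw [h1, mul_zero]

/-!
Complexifying the isotropic real subspace `L` gives an isotropic, conjugation-stable `L^ℂ`, on which
`ω(Y, Y^*)` therefore vanishes; positivity of `r` then forces `r_⊥ ∩ L^ℂ = 0`. Since `ω` is
nondegenerate on the `2n`-dimensional space, `dim r_⊥ ≥ dim r - dim L^ℂ`, so `dim ř ≥ n`, while the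
isotropic subspace `ř` has dimension at most `n`. For `Y = y + z` with `y ∈ r_⊥` and `z ∈ L^ℂ` all
cross terms of `ω(Y, Y^*)` vanish (using `ω(X^*, Y^*) = conj ω(X, Y)`), so `ω(Y, Y^*) = ω(y, y^*)`,
and `y ≠ 0` when `Y ∉ L^ℂ`.
-/

open Module

namespace LinearMap.BilinForm

section

variable {R M : Type*} [CommSemiring R] [AddCommMonoid M] [Module R M] {B : LinearMap.BilinForm R M}

theorem orthogonal_sup (A C : Submodule R M) :
    B.orthogonal (A ⊔ C) = B.orthogonal A ⊓ B.orthogonal C := by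
  refine le_antisymm (le_inf (orthogonal_le le_sup_left) (orthogonal_le le_sup_right)) ?_
  rintro x ⟨hA, hC⟩ y hy
  obtain ⟨a, ha, c, hc, rfl⟩ := Submodule.mem_sup.1 hy
  simp [hA a ha, hC c hc]

theorem IsRefl.le_orthogonal_comm (hB : B.IsRefl) {A C : Submodule R M} :
    A ≤ B.orthogonal C ↔ C ≤ B.orthogonal A :=
  ⟨fun h _ hc _ ha => hB _ _ (h ha _ hc), fun h _ ha _ hc => hB _ _ (h hc _ ha)⟩

theorem span_le_orthogonal_span {S : Set M} (h : ∀ x ∈ S, ∀ y ∈ S, B x y = 0) :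
    Submodule.span R S ≤ B.orthogonal (Submodule.span R S) :=
  Submodule.span_le.2 fun y hy _ hx =>
    (Submodule.span_le (p := LinearMap.ker (B.flip y))).2 (fun x hx => h x hx y hy) hx

theorem inf_orthogonal_sup_le_orthogonal (hB : B.IsRefl) {U W : Submodule R M}
    (hU : U ≤ B.orthogonal U) (hW : W ≤ B.orthogonal W) :
    U ⊓ B.orthogonal W ⊔ W ≤ B.orthogonal (U ⊓ B.orthogonal W ⊔ W) := by
  rw [orthogonal_sup]
  exact sup_le (le_inf (inf_le_left.trans (hU.trans (orthogonal_le inf_le_left))) inf_le_right)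
    (le_inf (hB.le_orthogonal_comm.1 inf_le_right) hW)

end

section

variable {K V : Type*} [Field K] [AddCommGroup V] [Module K V] [FiniteDimensional K V]
  {B : LinearMap.BilinForm K V}

theorem finrank_le_finrank_inf_orthogonal_add (U W : Submodule K V) :
    finrank K U ≤ finrank K ↥(U ⊓ B.orthogonal W) + finrank K W := by
  have hsup := Submodule.finrank_sup_add_finrank_inf_eq U (B.orthogonal W)
  have hperp := finrank_add_finrank_orthogonal' (B := B) W
  have hle := Submodule.finrank_le (U ⊔ B.orthogonal W)
  omega

theorem two_mul_finrank_le_of_le_orthogonal (hB : B.Nondegenerate) {W : Submodule K V}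
    (hW : W ≤ B.orthogonal W) : 2 * finrank K W ≤ finrank K V := by
  have := Submodule.finrank_mono hW
  have := finrank_orthogonal hB W
  have := Submodule.finrank_le W
  omega

theorem finrank_inf_orthogonal_sup_eq (hB : B.Nondegenerate) (hBr : B.IsRefl)
    {U W : Submodule K V} (hU : U ≤ B.orthogonal U) (hUdim : 2 * finrank K U = finrank K V)
    (hW : W ≤ B.orthogonal W) (hdisj : U ⊓ B.orthogonal W ⊓ W = ⊥) :
    finrank K ↥(U ⊓ B.orthogonal W ⊔ W) = finrank K U := by
  have hsum := Submodule.finrank_sup_add_finrank_inf_eq (U ⊓ B.orthogonal W) W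
  rw [hdisj, finrank_bot] at hsum
  have hlow := finrank_le_finrank_inf_orthogonal_add (B := B) U W
  have hup := two_mul_finrank_le_of_le_orthogonal hB (inf_orthogonal_sup_le_orthogonal hBr hU hW)
  omega

end

end LinearMap.BilinForm

noncomputable def symplBilin (n : ℕ) : LinearMap.BilinForm ℂ (CPhase n) :=
  LinearMap.mk₂ ℂ (symplFormC n)
    (fun _ _ _ => by simp only [symplFormC, ← Finset.sum_add_distrib]; congr! 1; simp; ring)
    (fun _ _ _ => by simp only [symplFormC, smul_eq_mul, Finset.mul_sum]; congr! 1; simp; ring)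
    (fun _ _ _ => by simp only [symplFormC, ← Finset.sum_add_distrib]; congr! 1; simp; ring)
    (fun _ _ _ => by simp only [symplFormC, smul_eq_mul, Finset.mul_sum]; congr! 1; simp; ring)

@[simp]
theorem symplBilin_apply (n : ℕ) (X Y : CPhase n) : symplBilin n X Y = symplFormC n X Y := rfl

theorem symplBilin_isAlt (n : ℕ) : (symplBilin n).IsAlt := fun X => by
  simp [symplFormC]

theorem symplBilin_nondegenerate (n : ℕ) : (symplBilin n).Nondegenerate := by
  refine (symplBilin_isAlt n).isRefl.nondegenerate_iff_separatingLeft.2 fun X hX => ?_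
  ext j
  · simpa [symplFormC, Pi.single_apply] using hX (0, Pi.single j 1)
  · simpa [symplFormC, Pi.single_apply] using hX (Pi.single j 1, 0)

theorem isIsotropicC_iff_le_orthogonal {n : ℕ} {V : Submodule ℂ (CPhase n)} :
    IsIsotropicC n V ↔ V ≤ (symplBilin n).orthogonal V :=
  ⟨fun h _ hY X hX => h X hX _ hY, fun h X hX _ hY => h hY X hX⟩

theorem skewPerpC_eq_orthogonal (n : ℕ) (V : Submodule ℂ (CPhase n)) :
    skewPerpC n V = (symplBilin n).orthogonal V := by
  ext
  exact forall₂_congr fun X _ => (symplBilin_isAlt n).eq_iff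

theorem conjV_eq_star (n : ℕ) (Y : CPhase n) : conjV n Y = star Y := rfl

theorem symplFormC_conjV_conjV (n : ℕ) (X Y : CPhase n) :
    symplFormC n (conjV n X) (conjV n Y) = starRingEnd ℂ (symplFormC n X Y) := by
  simp [symplFormC, conjV]

theorem symplFormC_incC (n : ℕ) (X Y : (Fin n → ℝ) × (Fin n → ℝ)) :
    symplFormC n (incC n X) (incC n Y) = symplForm n X Y := by
  simp [symplFormC, symplForm, incC]

theorem conjV_mem_complexify {n : ℕ} {L : Submodule ℝ ((Fin n → ℝ) × (Fin n → ℝ))}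
    {Y : CPhase n} (hY : Y ∈ complexify n L) : conjV n Y ∈ complexify n L := by
  rw [conjV_eq_star]
  induction hY using Submodule.span_induction with
  | mem x hx =>
    obtain ⟨a, ha, rfl⟩ := hx
    exact Submodule.subset_span ⟨a, ha, by ext <;> simp [incC]⟩
  | zero => simp
  | add x y _ _ hx hy => simpa using add_mem hx hy
  | smul c x _ hx => simpa using Submodule.smul_mem _ (star c) hx

theorem complexify_isIsotropicC {n : ℕ} {L : Submodule ℝ ((Fin n → ℝ) × (Fin n → ℝ))}
    (hL : IsIsotropic n L) : IsIsotropicC n (complexify n L) := by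
  refine isIsotropicC_iff_le_orthogonal.2 (LinearMap.BilinForm.span_le_orthogonal_span ?_)
  rintro _ ⟨X, hX, rfl⟩ _ ⟨Y, hY, rfl⟩
  simp [symplFormC_incC, hL X hX Y hY]

section
variable {n : ℕ} {r V : Submodule ℂ (CPhase n)}

theorem inf_skewPerpC_inf_eq_bot (hr : IsPositiveGerm n r) (hV : ∀ Y ∈ V, conjV n Y ∈ V) :
    r ⊓ skewPerpC n V ⊓ V = ⊥ := by
  refine eq_bot_iff.2 fun Y ⟨⟨hYr, hYperp⟩, hYV⟩ => (Submodule.mem_bot ℂ).2 ?_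
  by_contra hY0
  simpa [hYperp _ (hV Y hYV)] using (hr Y hYr hY0).1

theorem symplFormC_add_conjV_add_of_mem_skewPerpC (hV : IsIsotropicC n V)
    (hVc : ∀ Y ∈ V, conjV n Y ∈ V) {y z : CPhase n} (hy : y ∈ skewPerpC n V) (hz : z ∈ V) :
    symplFormC n (y + z) (conjV n (y + z)) = symplFormC n y (conjV n y) := by
  have hyz : symplFormC n y (conjV n z) = 0 := hy _ (hVc z hz)
  have hzy : symplFormC n z (conjV n y) = 0 := by
    have := congrArg (starRingEnd ℂ) hyz
    rw [← symplFormC_conjV_conjV] at this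
    simp only [conjV_eq_star, star_star, map_zero] at this
    exact (symplBilin_isAlt n).eq_iff.1 this
  have hzz : symplFormC n z (conjV n z) = 0 := hV z hz _ (hVc z hz)
  simp only [← symplBilin_apply, conjV_eq_star, star_add, map_add, LinearMap.add_apply]
    at hyz hzy hzz ⊢
  rw [hyz, hzy, hzz, add_zero, add_zero, add_zero]

theorem IsIsotropicC.inf_skewPerpC_sup (hr : IsIsotropicC n r) (hV : IsIsotropicC n V) :
    IsIsotropicC n (r ⊓ skewPerpC n V ⊔ V) := by
  rw [isIsotropicC_iff_le_orthogonal] at hr hV ⊢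
  rw [skewPerpC_eq_orthogonal]
  exact LinearMap.BilinForm.inf_orthogonal_sup_le_orthogonal (symplBilin_isAlt n).isRefl hr hV

theorem finrank_inf_skewPerpC_sup (hr : IsIsotropicC n r) (hrdim : finrank ℂ r = n)
    (hV : IsIsotropicC n V) (hdisj : r ⊓ skewPerpC n V ⊓ V = ⊥) :
    finrank ℂ ↥(r ⊓ skewPerpC n V ⊔ V) = n := by
  rw [isIsotropicC_iff_le_orthogonal] at hr hV
  rw [skewPerpC_eq_orthogonal] at hdisj ⊢
  rw [LinearMap.BilinForm.finrank_inf_orthogonal_sup_eq (symplBilin_nondegenerate n)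
    (symplBilin_isAlt n).isRefl hr ?_ hV hdisj, hrdim]
  simp [hrdim, two_mul]

end

theorem stmt_8_general (n : ℕ)
    (L : Submodule ℝ ((Fin n → ℝ) × (Fin n → ℝ)))
    (hLiso : IsIsotropic n L)
    (r : Submodule ℂ (CPhase n))
    (hrdim : Module.finrank ℂ r = n)
    (hriso : IsIsotropicC n r) (hrpos : IsPositiveGerm n r) :
    let Lc := complexify n L
    let rperp := r ⊓ skewPerpC n Lc
    let rcheck := rperp ⊔ Lc
    rperp ⊓ Lc = ⊥ ∧
    Module.finrank ℂ ↥rcheck = n ∧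
    IsIsotropicC n rcheck ∧
    (∀ Y ∈ Lc, symplFormC n Y (conjV n Y) = 0) ∧
    (∀ Y ∈ rcheck, Y ∉ Lc →
      0 < (-Complex.I * symplFormC n Y (conjV n Y)).re ∧
      (-Complex.I * symplFormC n Y (conjV n Y)).im = 0) := by
  intro Lc rperp rcheck
  have hLc : IsIsotropicC n Lc := complexify_isIsotropicC hLiso
  have hLcconj : ∀ Y ∈ Lc, conjV n Y ∈ Lc := fun _ => conjV_mem_complexify
  have hdisj : rperp ⊓ Lc = ⊥ := inf_skewPerpC_inf_eq_bot hrpos hLcconj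
  refine ⟨hdisj, finrank_inf_skewPerpC_sup hriso hrdim hLc hdisj, hriso.inf_skewPerpC_sup hLc,
    fun Y hY => hLc Y hY _ (hLcconj Y hY), fun Y hY hYLc => ?_⟩
  obtain ⟨y, ⟨hyr, hyperp⟩, z, hz, rfl⟩ := Submodule.mem_sup.1 hY
  have hy0 : y ≠ 0 := by
    rintro rfl
    exact hYLc (by simpa using hz)
  rw [symplFormC_add_conjV_add_of_mem_skewPerpC hLc hLcconj hyperp hz]
  exact hrpos y hyr hy0

theorem stmt_8 (n k : ℕ)
    (L : Submodule ℝ ((Fin n → ℝ) × (Fin n → ℝ)))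
    (hLdim : Module.finrank ℝ L = k) (hLiso : IsIsotropic n L)
    (r : Submodule ℂ (CPhase n))
    (hrdim : Module.finrank ℂ r = n)
    (hriso : IsIsotropicC n r) (hrpos : IsPositiveGerm n r) :
    let Lc := complexify n L
    let rperp := r ⊓ skewPerpC n Lc
    let rcheck := rperp ⊔ Lc
    rperp ⊓ Lc = ⊥ ∧
    Module.finrank ℂ ↥rcheck = n ∧
    IsIsotropicC n rcheck ∧
    (∀ Y ∈ Lc, symplFormC n Y (conjV n Y) = 0) ∧
    (∀ Y ∈ rcheck, Y ∉ Lc →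
      0 < (-Complex.I * symplFormC n Y (conjV n Y)).re ∧
      (-Complex.I * symplFormC n Y (conjV n Y)).im = 0) :=
  stmt_8_general n L hLiso r hrdim hriso hrpos
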